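/- arXiv:2103.03658 — 2 statements merged into one kernel-verified Lean document; each statement's English description precedes it below -/
import Mathlib

section
/- Let α ∈ (0,1) and let u : ℝ² → ℝ be bounded and Lipschitz continuous (with respect to the Euclidean norm). Then for every x ∈ ℝ² the function y ↦ (u(x) − u(y))/|x − y|^{2+α} is Lebesgue integrable on ℝ², the function ξ ↦ (S u(x,ξ) − 4u(x))/|ξ|^{2+α} is Lebesgue integrable on [0,∞)², and ∫_{ℝ²} (u(x) − u(y))/|x − y|^{2+α} dy = − ∫_{[0,∞)²} (S u(x,ξ) − 4u(x)) |ξ|^{−(2+α)} dξ. -/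
open MeasureTheory Set

/-- A point of `ℝ²` (with the Euclidean norm) built from two coordinates. -/
noncomputable def euclPt (a b : ℝ) : EuclideanSpace ℝ (Fin 2) :=
  (WithLp.equiv 2 (Fin 2 → ℝ)).symm ![a, b]

/-- The symmetrized four-point sum
`S u (x, ξ) = Σ_{(m₁,m₂) ∈ {0,1}²} u (x₁ + (−1)^{m₁} ξ₁, x₂ + (−1)^{m₂} ξ₂)`. -/
noncomputable def symmSum (u : EuclideanSpace ℝ (Fin 2) → ℝ)
    (x ξ : EuclideanSpace ℝ (Fin 2)) : ℝ :=
  u (euclPt (x 0 + ξ 0) (x 1 + ξ 1)) + u (euclPt (x 0 + ξ 0) (x 1 - ξ 1)) +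
    u (euclPt (x 0 - ξ 0) (x 1 + ξ 1)) + u (euclPt (x 0 - ξ 0) (x 1 - ξ 1))

/-!
Substituting `y = x + ξ` turns the first integrand into
`g ξ = (u x - u (x + ξ)) * ‖ξ‖ ^ (-(2 + α))`. It is integrable: near the origin the Lipschitz
bound gives `|g ξ| ≤ K ‖ξ‖ ^ (-(1 + α))` with `1 + α < 2`, and away from it boundedness gives
`|g ξ| ≤ 2 B ‖ξ‖ ^ (-(2 + α))` with `2 + α > 2`.

The reflections in the coordinate axes preserve Lebesgue measure and the norm, and the axes are
null sets. Folding the plane onto the closed first quadrant, one axis at a time, turns `∫ g` into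
the quadrant integral of the sum of `g` over the four reflections of `ξ`, and that sum is
`(4 u x - S u (x, ξ)) ‖ξ‖ ^ (-(2 + α))`.
-/

section Integrability

variable {E F : Type*} [NormedAddCommGroup E] [NormedSpace ℝ E] [FiniteDimensional ℝ E]
  [MeasurableSpace E] [BorelSpace E] {μ : Measure E} [μ.IsAddHaarMeasure] [NormedAddCommGroup F]

theorem integrableOn_compl_ball_of_norm_le_rpow {f : E → F} {C s r : ℝ} (hr : 0 < r)
    (hs : Module.finrank ℝ E < s)
    (h_decay : ∀ᵐ x ∂μ.restrict (Metric.ball 0 r)ᶜ, ‖f x‖ ≤ C * ‖x‖ ^ (-s))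
    (h_meas : AEStronglyMeasurable f μ) :
    IntegrableOn f (Metric.ball 0 r)ᶜ μ := by
  have hs0 : 0 ≤ s := (Nat.cast_nonneg _).trans hs.le
  refine Integrable.mono' (((integrable_one_add_norm (μ := μ) hs).const_mul
      (|C| * (1 + r⁻¹) ^ s)).integrableOn) h_meas.restrict ?_
  filter_upwards [h_decay, ae_restrict_mem measurableSet_ball.compl] with x hx hxr
  have hrx : r ≤ ‖x‖ := by simpa using hxr
  have hx0 : 0 < ‖x‖ := hr.trans_le hrx
  have hle : 1 + ‖x‖ ≤ (1 + r⁻¹) * ‖x‖ := by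
    have : 1 ≤ ‖x‖ / r := (one_le_div hr).2 hrx
    calc 1 + ‖x‖ ≤ ‖x‖ / r + ‖x‖ := by linarith
      _ = (1 + r⁻¹) * ‖x‖ := by ring
  have hr' : 0 < 1 + r⁻¹ := by positivity
  calc ‖f x‖ ≤ |C| * ‖x‖ ^ (-s) := hx.trans (by gcongr; exact le_abs_self C)
    _ = |C| * ((1 + r⁻¹) ^ s * ((1 + r⁻¹) * ‖x‖) ^ (-s)) := by
      rw [Real.mul_rpow hr'.le hx0.le, Real.rpow_neg hr'.le s,
        mul_inv_cancel_left₀ (Real.rpow_pos_of_pos hr' s).ne']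
    _ ≤ |C| * ((1 + r⁻¹) ^ s * (1 + ‖x‖) ^ (-s)) := by
      gcongr ?_ * (?_ * ?_)
      exact Real.rpow_le_rpow_of_nonpos (by positivity) hle (neg_nonpos.2 hs0)
    _ = |C| * (1 + r⁻¹) ^ s * (1 + ‖x‖) ^ (-s) := by ring

theorem integrable_sub_mul_norm_rpow_neg {u : E → ℝ} {B s : ℝ} {K : NNReal}
    (hd : 1 ≤ Module.finrank ℝ E) (hs : Module.finrank ℝ E < s)
    (hs' : s < Module.finrank ℝ E + 1) (hB : ∀ y, |u y| ≤ B) (hK : LipschitzWith K u) (x : E) :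
    Integrable (fun ξ => (u x - u (x + ξ)) * ‖ξ‖ ^ (-s)) μ := by
  have hs1 : 1 < s := lt_of_le_of_lt (by exact_mod_cast hd) hs
  have hu : Continuous u := hK.continuous
  have h_meas : AEStronglyMeasurable (fun ξ => (u x - u (x + ξ)) * ‖ξ‖ ^ (-s)) μ :=
    (by fun_prop : Measurable fun ξ => (u x - u (x + ξ)) * ‖ξ‖ ^ (-s)).aestronglyMeasurable
  rw [← integrableOn_univ, ← union_compl_self (Metric.ball (0 : E) 1)]
  refine IntegrableOn.union ?_ ?_
  · refine integrableOn_ball_of_norm_le_rpow hd (C := K) (α := s - 1) (by linarith)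
      (ae_of_all _ fun ξ => ?_) h_meas
    calc ‖(u x - u (x + ξ)) * ‖ξ‖ ^ (-s)‖ ≤ K * ‖ξ‖ * ‖ξ‖ ^ (-s) := by
          rw [norm_mul, Real.norm_of_nonneg (Real.rpow_nonneg (norm_nonneg ξ) _)]
          gcongr
          have := hK.norm_sub_le x (x + ξ)
          rwa [sub_add_cancel_left, norm_neg] at this
      _ = K * ‖ξ‖ ^ (-(s - 1)) := by
          rw [mul_assoc, ← Real.rpow_one_add' (norm_nonneg ξ) (by linarith)]
          ring_nf
  · refine integrableOn_compl_ball_of_norm_le_rpow one_pos hs (C := 2 * B)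
      (ae_of_all _ fun ξ => ?_) h_meas
    rw [norm_mul, Real.norm_of_nonneg (Real.rpow_nonneg (norm_nonneg ξ) _)]
    gcongr
    calc ‖u x - u (x + ξ)‖ ≤ |u x| + |u (x + ξ)| := abs_sub _ _
      _ ≤ 2 * B := by linarith [hB x, hB (x + ξ)]

end Integrability

theorem integral_eq_setIntegral_add_comp {X E : Type*} [MeasurableSpace X] {μ : Measure X}
    [NormedAddCommGroup E] [NormedSpace ℝ E] {σ : X → X} (hσ : MeasurePreserving σ μ μ)
    (hσe : MeasurableEmbedding σ) {H : Set X} (hH : MeasurableSet H)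
    (hHc : σ ⁻¹' Hᶜ =ᵐ[μ] H) {f : X → E} (hf : Integrable f μ) :
    ∫ x, f x ∂μ = ∫ x in H, (f x + f (σ x)) ∂μ := by
  have hfσ : Integrable (f ∘ σ) μ := (hσ.integrable_comp_emb hσe).2 hf
  rw [integral_add (g := fun x => f (σ x)) hf.integrableOn hfσ.integrableOn,
    ← setIntegral_congr_set (f := fun x => f (σ x)) hHc, hσ.setIntegral_preimage_emb hσe,
    integral_add_compl hH hf]

namespace EuclideanSpace

variable {ι : Type*} [Fintype ι]

theorem ae_apply_ne (i : ι) (c : ℝ) : ∀ᵐ ξ : EuclideanSpace ℝ ι, ξ i ≠ c :=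
  (PiLp.volume_preserving_ofLp ι).quasiMeasurePreserving.ae (Measure.ae_eval_ne _ i c)

variable [DecidableEq ι]

noncomputable def coordReflection (i : ι) : EuclideanSpace ℝ ι ≃ₗᵢ[ℝ] EuclideanSpace ℝ ι :=
  LinearIsometryEquiv.piLpCongrRight 2 fun j =>
    if j = i then LinearIsometryEquiv.neg ℝ else LinearIsometryEquiv.refl ℝ ℝ

theorem coordReflection_apply (i : ι) (ξ : EuclideanSpace ℝ ι) (j : ι) :
    coordReflection i ξ j = if j = i then -ξ j else ξ j := by
  simp only [coordReflection, LinearIsometryEquiv.piLpCongrRight_apply]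
  split_ifs <;> simp

theorem coordReflection_preimage_compl_ae_eq (i : ι) :
    coordReflection i ⁻¹' {ξ | 0 ≤ ξ i}ᶜ =ᵐ[volume] {ξ : EuclideanSpace ℝ ι | 0 ≤ ξ i} := by
  rw [Filter.eventuallyEq_set]
  filter_upwards [ae_apply_ne i 0] with ξ hξ
  simp only [mem_preimage, mem_compl_iff, mem_ofPred_eq, coordReflection_apply, if_true]
  grind

theorem coordReflection_preimage_of_ne {i j : ι} (h : j ≠ i) (p : ℝ → Prop) :
    coordReflection i ⁻¹' {ξ | p (ξ j)} = {ξ | p (ξ j)} := by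
  ext ξ
  simp [coordReflection_apply, h]

theorem _root_.MeasureTheory.Integrable.comp_coordReflection {E : Type*} [NormedAddCommGroup E]
    {f : EuclideanSpace ℝ ι → E} (hf : Integrable f) (i : ι) :
    Integrable fun ξ => f (coordReflection i ξ) :=
  ((coordReflection i).measurePreserving.integrable_comp_emb
    (coordReflection i).toHomeomorph.measurableEmbedding).2 hf

end EuclideanSpace

open EuclideanSpace

local notation "ℝ²" => EuclideanSpace ℝ (Fin 2)

theorem integral_eq_setIntegral_quadrant {E : Type*} [NormedAddCommGroup E] [NormedSpace ℝ E]
    {f : ℝ² → E} (hf : Integrable f) :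
    ∫ ξ, f ξ = ∫ ξ in {ξ : ℝ² | 0 ≤ ξ 0 ∧ 0 ≤ ξ 1},
      (f ξ + f (coordReflection 0 ξ) + (f (coordReflection 1 ξ)
        + f (coordReflection 0 (coordReflection 1 ξ)))) := by
  have hH (i : Fin 2) : MeasurableSet {ξ : ℝ² | 0 ≤ ξ i} :=
    measurableSet_le measurable_const (by fun_prop)
  have hσ (i : Fin 2) := (coordReflection (ι := Fin 2) i).measurePreserving
  have hσe (i : Fin 2) := (coordReflection (ι := Fin 2) i).toHomeomorph.measurableEmbedding
  have hσ1 : MeasurePreserving (coordReflection 1) (volume.restrict {ξ : ℝ² | 0 ≤ ξ 0})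
      (volume.restrict {ξ | 0 ≤ ξ 0}) := by
    have := (hσ 1).restrict_preimage_emb (hσe 1) {ξ | 0 ≤ ξ 0}
    rwa [coordReflection_preimage_of_ne (by decide)] at this
  rw [integral_eq_setIntegral_add_comp (hσ 0) (hσe 0) (hH 0)
      (coordReflection_preimage_compl_ae_eq 0) hf,
    integral_eq_setIntegral_add_comp (f := fun ξ => f ξ + f (coordReflection 0 ξ)) hσ1 (hσe 1)
      (hH 1) (ae_restrict_of_ae (coordReflection_preimage_compl_ae_eq 1))
      (hf.add (hf.comp_coordReflection 0)).integrableOn,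
    Measure.restrict_restrict (hH 1), ofPred_and, inter_comm]

theorem symmSum_eq_sum_coordReflection (u : ℝ² → ℝ) (x ξ : ℝ²) :
    symmSum u x ξ = u (x + ξ) + u (x + coordReflection 1 ξ) + u (x + coordReflection 0 ξ)
      + u (x + coordReflection 0 (coordReflection 1 ξ)) := by
  unfold symmSum
  refine congrArg₂ (· + ·) (congrArg₂ (· + ·) (congrArg₂ (· + ·) ?_ ?_) ?_) ?_ <;>
    congr 1 <;> ext i <;> fin_cases i <;> simp [euclPt, coordReflection_apply, sub_eq_add_neg]

/-- For `α ∈ (0,1)` and `u : ℝ² → ℝ` bounded and Lipschitz (Euclidean norm), for every `x`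
the function `y ↦ (u x − u y)/‖x − y‖^(2+α)` is integrable on `ℝ²`, the function
`ξ ↦ (S u(x,ξ) − 4 u x)/‖ξ‖^(2+α)` is integrable on `[0,∞)²`, and the two integrals
agree up to a sign. -/
theorem stmt1 (α : ℝ) (hα : α ∈ Set.Ioo (0:ℝ) 1) (u : EuclideanSpace ℝ (Fin 2) → ℝ)
    (hbd : ∃ B : ℝ, ∀ x, |u x| ≤ B) (hlip : ∃ K : NNReal, LipschitzWith K u)
    (x : EuclideanSpace ℝ (Fin 2)) :
    Integrable (fun y : EuclideanSpace ℝ (Fin 2) => (u x - u y) / ‖x - y‖ ^ (2 + α)) volume ∧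
    IntegrableOn (fun ξ : EuclideanSpace ℝ (Fin 2) =>
        (symmSum u x ξ - 4 * u x) / ‖ξ‖ ^ (2 + α))
      {ξ : EuclideanSpace ℝ (Fin 2) | 0 ≤ ξ 0 ∧ 0 ≤ ξ 1} volume ∧
    (∫ y : EuclideanSpace ℝ (Fin 2), (u x - u y) / ‖x - y‖ ^ (2 + α)) =
      - ∫ ξ in {ξ : EuclideanSpace ℝ (Fin 2) | 0 ≤ ξ 0 ∧ 0 ≤ ξ 1},
          (symmSum u x ξ - 4 * u x) * ‖ξ‖ ^ (-(2 + α)) := by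
  obtain ⟨B, hB⟩ := hbd
  obtain ⟨K, hK⟩ := hlip
  set g : ℝ² → ℝ := fun ξ => (u x - u (x + ξ)) * ‖ξ‖ ^ (-(2 + α))
  have hd : (Module.finrank ℝ ℝ² : ℝ) = 2 := by simp
  have hg : Integrable g := integrable_sub_mul_norm_rpow_neg (by simp)
    (by linarith [hα.1]) (by linarith [hα.2]) hB hK x
  have hshift : (fun y => (u x - u y) / ‖x - y‖ ^ (2 + α)) = fun y => g (y - x) := by
    funext y
    simp only [g, add_sub_cancel, norm_sub_rev x y, Real.rpow_neg (norm_nonneg _),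
      div_eq_mul_inv]
  have hsymm : (fun ξ => g ξ + g (coordReflection 0 ξ)
      + (g (coordReflection 1 ξ) + g (coordReflection 0 (coordReflection 1 ξ))))
      = fun ξ => -((symmSum u x ξ - 4 * u x) * ‖ξ‖ ^ (-(2 + α))) := by
    funext ξ
    simp only [g, LinearIsometryEquiv.norm_map, symmSum_eq_sum_coordReflection]
    ring
  have hsymm_int : Integrable fun ξ => (symmSum u x ξ - 4 * u x) * ‖ξ‖ ^ (-(2 + α)) := by
    have : Integrable fun ξ => g ξ + g (coordReflection 0 ξ)
        + (g (coordReflection 1 ξ) + g (coordReflection 0 (coordReflection 1 ξ))) :=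
      (hg.add (hg.comp_coordReflection 0)).add
        ((hg.comp_coordReflection 1).add ((hg.comp_coordReflection 0).comp_coordReflection 1))
    rw [hsymm] at this
    simpa using this.neg
  refine ⟨hshift ▸ hg.comp_sub_right x, ?_, ?_⟩
  · simp_rw [div_eq_mul_inv, ← Real.rpow_neg (norm_nonneg _)]
    exact hsymm_int.integrableOn
  · rw [hshift, integral_sub_right_eq_self, integral_eq_setIntegral_quadrant hg, hsymm,
      integral_neg]
end

section
/- Let α ∈ (0,2), L > 0, c > 0, and let N ≥ 3 be an integer. Let a₁, …, a_N be positive real numbers and define a₀ = −2(Σ_{j=1}^N a_j + 1/(α L^α)). Then the (N−1) × (N−1) real symmetric Toeplitz matrix A with entries A_{ij} = −c · a_{|i−j|} (1 ≤ i, j ≤ N−1, with a₀ on the diagonal) is positive definite. -/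
/-!
For a symmetric `M` with row sums `rᵢ`, `2 xᵀMx = 2 ∑ᵢ rᵢ xᵢ² - ∑ᵢⱼ Mᵢⱼ (xᵢ - xⱼ)²`, so a symmetric
matrix with nonpositive off-diagonal entries and positive row sums is positive definite. In the
Toeplitz matrix `-c a_{|i-j|}` every distance `k ∈ [1, N]` occurs at most twice in a row, so each
row sum is at least `-c (a₀ + 2 ∑ⱼ aⱼ) = 2c / (α L^α) > 0`.
-/

open Matrix Finset

namespace Matrix

variable {n : Type*} [Fintype n]

theorem two_mul_dotProduct_mulVec_eq_of_isSymm {R : Type*} [CommRing R] {M : Matrix n n R}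
    (hM : M.IsSymm) (x : n → R) :
    2 * (x ⬝ᵥ M *ᵥ x) = 2 * ∑ i, (∑ j, M i j) * x i ^ 2 - ∑ i, ∑ j, M i j * (x i - x j) ^ 2 := by
  have hswap : ∑ i, ∑ j, M i j * x j ^ 2 = ∑ i, (∑ j, M i j) * x i ^ 2 := by
    rw [sum_comm]
    simp only [sum_mul, hM.apply]
  have hexpand : ∑ i, ∑ j, M i j * (x i - x j) ^ 2 = ∑ i, (∑ j, M i j) * x i ^ 2
      - 2 * ∑ i, ∑ j, M i j * (x i * x j) + ∑ i, ∑ j, M i j * x j ^ 2 := by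
    simp only [mul_sum, sum_mul, ← sum_sub_distrib, ← sum_add_distrib]
    refine sum_congr rfl fun i _ => sum_congr rfl fun j _ => by ring
  have hquad : x ⬝ᵥ M *ᵥ x = ∑ i, ∑ j, M i j * (x i * x j) := by
    simp only [dotProduct, mulVec, mul_sum]
    refine sum_congr rfl fun i _ => sum_congr rfl fun j _ => by ring
  rw [hexpand, hswap, hquad]
  ring

theorem posDef_of_isSymm_of_nonpos_of_sum_pos {M : Matrix n n ℝ} (hM : M.IsSymm)
    (hoff : ∀ i j, i ≠ j → M i j ≤ 0) (hrow : ∀ i, 0 < ∑ j, M i j) : M.PosDef := by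
  refine .of_dotProduct_mulVec_pos (isHermitian_iff_isSymm.2 hM) fun x hx => ?_
  obtain ⟨i₀, hi₀⟩ := Function.ne_iff.1 hx
  have hdiag : 0 < ∑ i, (∑ j, M i j) * x i ^ 2 :=
    sum_pos' (fun i _ => mul_nonneg (hrow i).le (sq_nonneg _))
      ⟨i₀, mem_univ _, mul_pos (hrow i₀) (sq_pos_of_ne_zero hi₀)⟩
  have hcross : ∑ i, ∑ j, M i j * (x i - x j) ^ 2 ≤ 0 :=
    sum_nonpos fun i _ => sum_nonpos fun j _ => by
      rcases eq_or_ne i j with rfl | hij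
      · simp
      · exact mul_nonpos_of_nonpos_of_nonneg (hoff i j hij) (sq_nonneg _)
  have := two_mul_dotProduct_mulVec_eq_of_isSymm hM x
  rw [star_trivial]
  linarith

end Matrix

section Toeplitz

variable {m N : ℕ}

theorem isSymm_of_natAbs_sub {R : Type*} (f : ℕ → R) :
    (Matrix.of fun i j : Fin m => f ((i.val : ℤ) - (j.val : ℤ)).natAbs).IsSymm :=
  IsSymm.ext fun i j => by rw [of_apply, of_apply, ← Int.natAbs_neg, neg_sub]

theorem natAbs_sub_mem_Icc (hm : m ≤ N + 1) {i j : Fin m} (hij : i ≠ j) :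
    ((i.val : ℤ) - (j.val : ℤ)).natAbs ∈ Icc 1 N := by
  have := Fin.val_ne_of_ne hij
  rw [mem_Icc]
  omega

theorem sum_natAbs_sub_le (hm : m ≤ N + 1) {a : ℕ → ℝ} (ha : ∀ k ∈ Icc 1 N, 0 ≤ a k)
    (i : Fin m) :
    ∑ j : Fin m, a ((i.val : ℤ) - (j.val : ℤ)).natAbs ≤ a 0 + 2 * ∑ k ∈ Icc 1 N, a k := by
  set e : Fin m → ℕ × Bool := fun j => (((i.val : ℤ) - (j.val : ℤ)).natAbs, decide (j < i))
  have he : Set.InjOn e (univ.erase i) := by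
    intro j _ k _ hjk
    simp only [e, Prod.mk.injEq, decide_eq_decide, Fin.lt_def] at hjk
    ext
    omega
  have hmaps : (univ.erase i).image e ⊆ Icc 1 N ×ˢ univ := by
    simp only [image_subset_iff, mem_erase, mem_product, mem_univ, and_true]
    exact fun j hj => natAbs_sub_mem_Icc hm (Ne.symm hj)
  rw [← add_sum_erase _ _ (mem_univ i), sub_self, Int.natAbs_zero]
  gcongr
  calc ∑ j ∈ univ.erase i, a ((i.val : ℤ) - (j.val : ℤ)).natAbs
      = ∑ p ∈ (univ.erase i).image e, a p.1 := (sum_image (f := fun p => a p.1) he).symm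
    _ ≤ ∑ p ∈ Icc 1 N ×ˢ univ, a p.1 :=
      sum_le_sum_of_subset_of_nonneg hmaps fun p hp _ => ha _ (mem_product.1 hp).1
    _ = 2 * ∑ k ∈ Icc 1 N, a k := by
      rw [sum_product, mul_sum]
      simp [two_mul]

end Toeplitz

theorem stmt13_general (α L c : ℝ) (hα : α ∈ Set.Ioo (0:ℝ) 2) (hL : 0 < L) (hc : 0 < c)
    (N : ℕ) (a : ℕ → ℝ)
    (hpos : ∀ j : ℕ, 1 ≤ j → j ≤ N → 0 < a j)
    (ha0 : a 0 = -2 * ((∑ j ∈ Finset.Icc 1 N, a j) + 1 / (α * L ^ α))) :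
    (Matrix.of fun i j : Fin (N - 1) =>
      -c * a ((i.val : ℤ) - (j.val : ℤ)).natAbs).PosDef := by
  have hm : N - 1 ≤ N + 1 := by omega
  have ha : ∀ k ∈ Icc 1 N, 0 ≤ a k := fun k hk => (hpos k (mem_Icc.1 hk).1 (mem_Icc.1 hk).2).le
  have hα0 := hα.1
  have hgap : 0 < 1 / (α * L ^ α) := by positivity
  refine posDef_of_isSymm_of_nonpos_of_sum_pos (isSymm_of_natAbs_sub fun k => -c * a k)
    (fun i j hij => ?_) (fun i => ?_)
  · obtain ⟨hk1, hkN⟩ := mem_Icc.1 (natAbs_sub_mem_Icc hm hij)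
    have := hpos _ hk1 hkN
    rw [of_apply]
    nlinarith
  · have := sum_natAbs_sub_le hm ha i
    simp only [of_apply, ← mul_sum]
    nlinarith

/-- Let `α ∈ (0,2)`, `L > 0`, `c > 0`, `N ≥ 3`, and let `a₁,…,a_N > 0` with
`a₀ = −2(Σ_{j=1}^N a_j + 1/(αL^α))`. Then the `(N−1)×(N−1)` symmetric Toeplitz matrix
with entries `A_{ij} = −c·a_{|i−j|}` is positive definite. -/
theorem stmt13 (α L c : ℝ) (hα : α ∈ Set.Ioo (0:ℝ) 2) (hL : 0 < L) (hc : 0 < c)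
    (N : ℕ) (hN : 3 ≤ N) (a : ℕ → ℝ)
    (hpos : ∀ j : ℕ, 1 ≤ j → j ≤ N → 0 < a j)
    (ha0 : a 0 = -2 * ((∑ j ∈ Finset.Icc 1 N, a j) + 1 / (α * L ^ α))) :
    (Matrix.of fun i j : Fin (N - 1) =>
      -c * a ((i.val : ℤ) - (j.val : ℤ)).natAbs).PosDef :=
  stmt13_general α L c hα hL hc N a hpos ha0
end
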